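/- The composite of two finitary polynomial functors is a finitary polynomial functor: given finitary polynomials P = (J ← E₁ → B₁ → I) and Q = (I ← E₂ → B₂ → K) over sets, there exists a finitary polynomial R = (J ← E₃ → B₃ → K) whose associated functor R̲ : Set^J → Set^K is naturally isomorphic to the composite Q̲ ∘ P̲. -/

import Mathlib

/-!
The composite polynomial is the usual one: a base of `R` is a base `b` of `Q` together with a
choice, for each edge `e` over `b`, of a base of `P` sitting over `s₂ e`; its edges over such a
base are the pairs of an edge `e` over `b` and an edge of `P` over the chosen base. Finite fibres
stay finite since they are finite sums of finite sets, and the natural isomorphism is just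
`Σ ∏ Σ ∏ ≅ Σ Σ ∏ ∏`, the distributivity of products over sums followed by reassociation.
-/

open CategoryTheory CategoryTheory.Limits

/-- The polynomial functor `Set^J → Set^I` associated to a polynomial
`J ←s− E −p→ B −t→ I` over sets:
`P̲(X) i = ⨿_{b ∈ t⁻¹(i)} ∏_{e ∈ p⁻¹(b)} X (s e)`.
(Here `Set^J` is modelled as the category `J → Type` of `J`-indexed families
of sets.) -/
def polyFunctor {J I E B : Type} (s : E → J) (pf : E → B) (t : B → I) :
    (J → Type) ⥤ (I → Type) where
  obj X i := Σ b : {b : B // t b = i}, ∀ e : {e : E // pf e = (b : B)}, X (s e)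
  map f i := TypeCat.ofHom fun x => ⟨x.1, fun e => f (s e) (x.2 e)⟩

namespace PolyComp

variable {J I K E₁ B₁ E₂ B₂ : Type}
  (s₁ : E₁ → J) (p₁ : E₁ → B₁) (t₁ : B₁ → I) (s₂ : E₂ → I) (p₂ : E₂ → B₂) (t₂ : B₂ → K)

def Base : Type :=
  Σ b : B₂, ∀ e : {e : E₂ // p₂ e = b}, {b₁ : B₁ // t₁ b₁ = s₂ e}

def Edge : Type :=
  Σ β : Base t₁ s₂ p₂, Σ e₂ : {e : E₂ // p₂ e = β.1}, {e₁ : E₁ // p₁ e₁ = (β.2 e₂ : B₁)}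

abbrev functor : (J → Type) ⥤ (K → Type) :=
  polyFunctor (fun x : Edge p₁ t₁ s₂ p₂ => s₁ x.2.2) Sigma.fst (fun β => t₂ β.1)

variable {p₁ t₁ s₂ p₂} in
theorem finite_fiber_edge (h₁ : ∀ b : B₁, Finite {e : E₁ // p₁ e = b})
    (h₂ : ∀ b : B₂, Finite {e : E₂ // p₂ e = b}) (β : Base t₁ s₂ p₂) :
    Finite {x : Edge p₁ t₁ s₂ p₂ // x.1 = β} :=
  Finite.of_equiv _ (Equiv.sigmaSubtype β).symm

def objEquiv (X : J → Type) (k : K) :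
    (functor s₁ p₁ t₁ s₂ p₂ t₂).obj X k ≃
      (polyFunctor s₁ p₁ t₁ ⋙ polyFunctor s₂ p₂ t₂).obj X k where
  toFun x := ⟨⟨x.1.1.1, x.1.2⟩, fun e₂ => ⟨x.1.1.2 e₂, fun e₁ => x.2 ⟨⟨x.1.1, e₂, e₁⟩, rfl⟩⟩⟩
  invFun y := ⟨⟨⟨y.1.1, fun e₂ => (y.2 e₂).1⟩, y.1.2⟩, fun ⟨⟨_, e₂, e₁⟩, rfl⟩ => (y.2 e₂).2 e₁⟩
  left_inv := by
    rintro ⟨β, f⟩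
    refine congrArg (Sigma.mk β) (funext ?_)
    rintro ⟨⟨β', e₂, e₁⟩, hβ⟩
    dsimp only at hβ
    subst hβ
    rfl
  right_inv _ := rfl

def iso : functor s₁ p₁ t₁ s₂ p₂ t₂ ≅ polyFunctor s₁ p₁ t₁ ⋙ polyFunctor s₂ p₂ t₂ :=
  NatIso.ofComponents (fun X => Pi.isoMk fun k => (objEquiv s₁ p₁ t₁ s₂ p₂ t₂ X k).toIso)
    fun _ => rfl

end PolyComp

/-- STATEMENT: the composite of two finitary polynomial functors is a finitary
polynomial functor: given finitary polynomials `P = (J ← E₁ → B₁ → I)` and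
`Q = (I ← E₂ → B₂ → K)` over sets, there is a finitary polynomial
`R = (J ← E₃ → B₃ → K)` whose associated functor `Set^J → Set^K` is naturally
isomorphic to the composite `Q̲ ∘ P̲`. -/
theorem stmt12 {J I K E₁ B₁ E₂ B₂ : Type}
    (s₁ : E₁ → J) (p₁ : E₁ → B₁) (t₁ : B₁ → I)
    (s₂ : E₂ → I) (p₂ : E₂ → B₂) (t₂ : B₂ → K)
    (h₁ : ∀ b : B₁, Finite {e : E₁ // p₁ e = b})
    (h₂ : ∀ b : B₂, Finite {e : E₂ // p₂ e = b}) :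
    ∃ (E₃ B₃ : Type) (s₃ : E₃ → J) (p₃ : E₃ → B₃) (t₃ : B₃ → K),
      (∀ b : B₃, Finite {e : E₃ // p₃ e = b}) ∧
      Nonempty (polyFunctor s₃ p₃ t₃ ≅ polyFunctor s₁ p₁ t₁ ⋙ polyFunctor s₂ p₂ t₂) :=
  ⟨_, _, _, _, _, PolyComp.finite_fiber_edge h₁ h₂, ⟨PolyComp.iso s₁ p₁ t₁ s₂ p₂ t₂⟩⟩
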